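/- For every integer m ≥ 1, Σ_{π∈P({1,…,m})} ∏_{S∈π} |S|! ≤ m! · e^m, where the sum runs over all partitions π of the set {1,…,m} into nonempty blocks and |S| denotes the cardinality of the block S. -/

import Mathlib

/-!
Write `B(s)` for the sum. Splitting off the block `T` containing a fixed point `a ∈ s` gives
`B(s) = ∑_{a ∈ T ⊆ s} |T|! B(s \ T)`. If `|s| = k + 1`, then by strong induction the terms
with `|T| = j + 1` contribute at most `C(k, j) (j+1)! (k-j)! e^(k-j) = (j+1) k! e^(k-j)`,
which is at most `k! e^(k+1)` because `j + 1 ≤ e^j`. There are `k + 1` values of `j`, so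
`B(s) ≤ (k+1)! e^(k+1)`.
-/

namespace Clustering

/-- The finset of set partitions of a finset `s` into nonempty blocks. -/
def partitionsOf {ι : Type*} [DecidableEq ι] (s : Finset ι) : Finset (Finset (Finset ι)) :=
  s.powerset.powerset.filter fun P =>
    P.sup id = s ∧ (∅ : Finset ι) ∉ P ∧ ∀ A ∈ P, ∀ B ∈ P, A ≠ B → Disjoint A B

open Finset Nat Real

section Partitions

variable {ι : Type*} [DecidableEq ι] {s T : Finset ι} {P Q : Finset (Finset ι)}

theorem mem_partitionsOf :
    P ∈ partitionsOf s ↔ P.sup id = s ∧ (∅ : Finset ι) ∉ P ∧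
      ∀ A ∈ P, ∀ B ∈ P, A ≠ B → Disjoint A B := by
  refine ⟨fun h ↦ (mem_filter.mp h).2, fun h ↦ mem_filter.mpr ⟨?_, h⟩⟩
  exact mem_powerset.mpr fun S hS ↦ mem_powerset.mpr (h.1 ▸ le_sup (f := id) hS)

theorem subset_of_mem_partitionsOf (hP : P ∈ partitionsOf s) (hT : T ∈ P) : T ⊆ s :=
  (mem_partitionsOf.mp hP).1 ▸ le_sup (f := id) hT

theorem exists_mem_of_mem_partitionsOf (hP : P ∈ partitionsOf s) {a : ι} (ha : a ∈ s) :
    ∃ T ∈ P, a ∈ T := by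
  rw [← (mem_partitionsOf.mp hP).1] at ha
  exact mem_sup.mp ha

theorem partitionsOf_empty : partitionsOf (∅ : Finset ι) = {∅} := by
  ext P
  refine ⟨fun hP ↦ mem_singleton.mpr (eq_empty_of_forall_notMem fun S hS ↦ ?_), ?_⟩
  · have hS_empty : S = ∅ := subset_empty.mp (subset_of_mem_partitionsOf hP hS)
    exact (mem_partitionsOf.mp hP).2.1 (hS_empty ▸ hS)
  · rintro hP
    rw [mem_singleton.mp hP]
    exact mem_partitionsOf.mpr ⟨rfl, notMem_empty _, by simp⟩

theorem notMem_of_mem_partitionsOf_sdiff (hQ : Q ∈ partitionsOf (s \ T)) (hT : T.Nonempty) :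
    T ∉ Q := fun hTQ ↦ by
  obtain ⟨a, ha⟩ := hT
  exact (mem_sdiff.mp (subset_of_mem_partitionsOf hQ hTQ ha)).2 ha

theorem erase_mem_partitionsOf (hP : P ∈ partitionsOf s) (hT : T ∈ P) :
    P.erase T ∈ partitionsOf (s \ T) := by
  obtain ⟨hsup, hne, hdis⟩ := mem_partitionsOf.mp hP
  refine mem_partitionsOf.mpr ⟨?_, fun h ↦ hne (mem_of_mem_erase h),
    fun A hA B hB ↦ hdis A (mem_of_mem_erase hA) B (mem_of_mem_erase hB)⟩
  ext x
  simp only [← hsup, mem_sup, mem_sdiff, mem_erase, id]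
  constructor
  · rintro ⟨S, ⟨hST, hS⟩, hx⟩
    exact ⟨⟨S, hS, hx⟩, disjoint_left.mp (hdis S hS T hT hST) hx⟩
  · rintro ⟨⟨S, hS, hx⟩, hxT⟩
    exact ⟨S, ⟨by rintro rfl; exact hxT hx, hS⟩, hx⟩

theorem insert_mem_partitionsOf (hTs : T ⊆ s) (hT : T.Nonempty) (hQ : Q ∈ partitionsOf (s \ T)) :
    insert T Q ∈ partitionsOf s := by
  obtain ⟨hsup, hne, hdis⟩ := mem_partitionsOf.mp hQ
  have hQT : ∀ S ∈ Q, Disjoint S T := fun S hS ↦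
    disjoint_of_subset_left (subset_of_mem_partitionsOf hQ hS) sdiff_disjoint
  refine mem_partitionsOf.mpr ⟨?_, ?_, ?_⟩
  · rw [sup_insert, hsup, id, sup_eq_union, union_sdiff_of_subset hTs]
  · rw [mem_insert, not_or]
    exact ⟨fun h ↦ hT.ne_empty h.symm, hne⟩
  · simp only [mem_insert]
    rintro A (rfl | hA) B (rfl | hB) hAB
    · exact absurd rfl hAB
    · exact (hQT B hB).symm
    · exact hQT A hA
    · exact hdis A hA B hB hAB

theorem sum_partitionsOf_prod_eq {M : Type*} [CommSemiring M] (f : Finset ι → M) {a : ι}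
    (ha : a ∈ s) :
    ∑ P ∈ partitionsOf s, ∏ S ∈ P, f S =
      ∑ T ∈ s.powerset with a ∈ T, f T * ∑ Q ∈ partitionsOf (s \ T), ∏ S ∈ Q, f S := by
  simp_rw [mul_sum]
  rw [sum_sigma']
  symm
  refine sum_bij (fun x _ ↦ insert x.1 x.2) ?_ ?_ ?_ ?_
  · rintro ⟨T, Q⟩ hx
    simp only [mem_sigma, mem_filter, mem_powerset] at hx
    exact insert_mem_partitionsOf hx.1.1 ⟨a, hx.1.2⟩ hx.2
  · rintro ⟨T, Q⟩ hx ⟨T', Q'⟩ hx' h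
    simp only [mem_sigma, mem_filter, mem_powerset] at hx hx'
    obtain rfl : T = T' := by
      have hT : T ∈ insert T' Q' := h ▸ mem_insert_self T Q
      refine (mem_insert.mp hT).resolve_right fun hTQ' ↦ ?_
      exact (mem_sdiff.mp (subset_of_mem_partitionsOf hx'.2 hTQ' hx.1.2)).2 hx'.1.2
    obtain rfl : Q = Q' := by
      rw [← erase_insert (notMem_of_mem_partitionsOf_sdiff hx.2 ⟨a, hx.1.2⟩), h,
        erase_insert (notMem_of_mem_partitionsOf_sdiff hx'.2 ⟨a, hx.1.2⟩)]
    rfl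
  · intro P hP
    obtain ⟨T, hT, haT⟩ := exists_mem_of_mem_partitionsOf hP ha
    refine ⟨⟨T, P.erase T⟩, ?_, insert_erase hT⟩
    simp only [mem_sigma, mem_filter, mem_powerset]
    exact ⟨⟨subset_of_mem_partitionsOf hP hT, haT⟩, erase_mem_partitionsOf hP hT⟩
  · rintro ⟨T, Q⟩ hx
    simp only [mem_sigma, mem_filter, mem_powerset] at hx
    exact (prod_insert (notMem_of_mem_partitionsOf_sdiff hx.2 ⟨a, hx.1.2⟩)).symm

end Partitions

theorem sum_filter_mem_powerset {ι M : Type*} [DecidableEq ι] [AddCommMonoid M]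
    (f : Finset ι → M) {s : Finset ι} {a : ι} (ha : a ∈ s) :
    ∑ T ∈ s.powerset with a ∈ T, f T = ∑ U ∈ (s.erase a).powerset, f (insert a U) := by
  refine sum_nbij' (fun T ↦ T.erase a) (insert a) ?_ ?_ ?_ ?_ ?_
  · intro T hT
    simp only [mem_filter, mem_powerset] at hT ⊢
    exact erase_subset_erase a hT.1
  · intro U hU
    simp only [mem_filter, mem_powerset] at hU ⊢
    exact ⟨insert_subset ha (hU.trans (erase_subset a s)), mem_insert_self a U⟩
  · intro T hT
    exact insert_erase (mem_filter.mp hT).2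
  · intro U hU
    exact erase_insert fun h ↦ notMem_erase a s (mem_powerset.mp hU h)
  · intro T hT
    rw [insert_erase (mem_filter.mp hT).2]

theorem choose_mul_factorial_succ_mul_factorial {j k : ℕ} (hj : j ≤ k) :
    k.choose j * (j + 1)! * (k - j)! = (j + 1) * k ! := by
  rw [factorial_succ, ← choose_mul_factorial_mul_factorial hj]
  ring

theorem add_one_mul_exp_one_pow_le {j k : ℕ} (hj : j ≤ k) :
    (j + 1 : ℝ) * exp 1 ^ (k - j) ≤ exp 1 ^ (k + 1) :=
  calc (j + 1 : ℝ) * exp 1 ^ (k - j)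
      ≤ exp 1 ^ j * exp 1 ^ (k - j) := by
        gcongr
        rw [exp_one_pow]
        exact add_one_le_exp j
    _ = exp 1 ^ k := by rw [← pow_add, Nat.add_sub_cancel' hj]
    _ ≤ exp 1 ^ (k + 1) := pow_le_pow_right₀ (one_le_exp zero_le_one) k.le_succ

theorem choose_mul_factorial_mul_exp_le {j k : ℕ} (hj : j ≤ k) :
    (k.choose j : ℝ) * ((j + 1)! * ((k - j)! * exp 1 ^ (k - j))) ≤ k ! * exp 1 ^ (k + 1) :=
  calc (k.choose j : ℝ) * ((j + 1)! * ((k - j)! * exp 1 ^ (k - j)))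
      = ((k.choose j * (j + 1)! * (k - j)! : ℕ) : ℝ) * exp 1 ^ (k - j) := by push_cast; ring
    _ = k ! * ((j + 1 : ℝ) * exp 1 ^ (k - j)) := by
        rw [choose_mul_factorial_succ_mul_factorial hj]; push_cast; ring
    _ ≤ k ! * exp 1 ^ (k + 1) := by gcongr; exact add_one_mul_exp_one_pow_le hj

theorem sum_partitionsOf_prod_factorial_le {ι : Type*} [DecidableEq ι] (s : Finset ι) :
    ((∑ P ∈ partitionsOf s, ∏ S ∈ P, (#S)! : ℕ) : ℝ) ≤ (#s)! * exp 1 ^ #s := by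
  induction s using Finset.strongInduction with | H s ih => ?_
  obtain rfl | ⟨a, ha⟩ := s.eq_empty_or_nonempty
  · simp [partitionsOf_empty]
  obtain ⟨k, hk⟩ : ∃ k, #s = k + 1 := exists_eq_succ_of_ne_zero (card_ne_zero_of_mem ha)
  calc ((∑ P ∈ partitionsOf s, ∏ S ∈ P, (#S)! : ℕ) : ℝ)
      = ∑ T ∈ s.powerset with a ∈ T,
          ((#T)! : ℝ) * ((∑ Q ∈ partitionsOf (s \ T), ∏ S ∈ Q, (#S)! : ℕ) : ℝ) := by
        rw [sum_partitionsOf_prod_eq _ ha]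
        push_cast
        rfl
    _ ≤ ∑ T ∈ s.powerset with a ∈ T, ((#T)! : ℝ) * ((#s - #T)! * exp 1 ^ (#s - #T)) := by
        gcongr with T hT
        simp only [mem_filter, mem_powerset] at hT
        rw [← card_sdiff_of_subset hT.1]
        exact ih _ (sdiff_ssubset hT.1 ⟨a, hT.2⟩)
    _ = ∑ U ∈ (s.erase a).powerset, ((#U + 1)! : ℝ) * ((k - #U)! * exp 1 ^ (k - #U)) := by
        rw [sum_filter_mem_powerset _ ha]
        refine sum_congr rfl fun U hU ↦ ?_
        rw [card_insert_of_notMem fun h ↦ notMem_erase a s (mem_powerset.mp hU h), hk,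
          Nat.add_sub_add_right]
    _ = ∑ j ∈ range (k + 1), (k.choose j : ℝ) * ((j + 1)! * ((k - j)! * exp 1 ^ (k - j))) := by
        rw [sum_powerset_apply_card (fun j ↦ ((j + 1)! : ℝ) * ((k - j)! * exp 1 ^ (k - j))),
          card_erase_of_mem ha, hk, Nat.add_sub_cancel]
        simp only [nsmul_eq_mul]
    _ ≤ ∑ _j ∈ range (k + 1), (k ! : ℝ) * exp 1 ^ (k + 1) :=
        sum_le_sum fun j hj ↦
          choose_mul_factorial_mul_exp_le (Nat.lt_succ_iff.mp (mem_range.mp hj))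
    _ = (#s)! * exp 1 ^ #s := by
        rw [sum_const, card_range, nsmul_eq_mul, hk, factorial_succ]
        push_cast
        ring

theorem partition_factorial_sum_le_general (m : ℕ) :
    ((∑ P ∈ partitionsOf (Finset.univ : Finset (Fin m)),
        ∏ S ∈ P, Nat.factorial S.card : ℕ) : ℝ)
      ≤ (Nat.factorial m : ℝ) * Real.exp 1 ^ m := by
  simpa using sum_partitionsOf_prod_factorial_le (Finset.univ : Finset (Fin m))

/-- **Combinatorial estimate (4.20).** For every `m ≥ 1`,
`Σ_{π∈P({1,…,m})} ∏_{S∈π} |S|! ≤ m!·e^m`. -/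
theorem partition_factorial_sum_le (m : ℕ) (hm : 1 ≤ m) :
    ((∑ P ∈ partitionsOf (Finset.univ : Finset (Fin m)),
        ∏ S ∈ P, Nat.factorial S.card : ℕ) : ℝ)
      ≤ (Nat.factorial m : ℝ) * Real.exp 1 ^ m :=
  partition_factorial_sum_le_general m

end Clustering
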